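/- (Corollary 1: EMD characterization of the indistinguishability region.) Let A be a nonempty finite set, d : A × A → ℝ nonnegative with d(a,a) = 0 for all a, and let P_0, P_1 be strictly positive PMFs on A and Δ_0, Δ_1 ≥ 0. Then min over PMFs Q on A × A with first marginal P_0 and ∑_{(a,b)} Q(a,b)·d(a,b) ≤ Δ_0 of D̃_{Δ_1}(Q_Y, P_1) equals 0 (where Q_Y is the second marginal of Q) if and only if there exists a PMF P_Y on A with EMD_d(P_0, P_Y) ≤ Δ_0 and EMD_d(P_1, P_Y) ≤ Δ_1. -/

import Mathlib

open scoped Classical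
open Finset Filter

noncomputable section

/-- A probability mass function on a finite alphabet, as a real-valued function. -/
def IsPMF {A : Type} [Fintype A] (P : A → ℝ) : Prop :=
  (∀ a, 0 ≤ P a) ∧ ∑ a, P a = 1

/-- Kullback--Leibler divergence `D(Q‖P) = ∑_{a : Q a > 0} Q a · ln (Q a / P a)`. -/
def klDiv {A : Type} [Fintype A] (Q P : A → ℝ) : ℝ :=
  ∑ a, if 0 < Q a then Q a * Real.log (Q a / P a) else 0

/-- First marginal of a joint PMF on `A × A`. -/
def margX {A : Type} [Fintype A] (Q : A × A → ℝ) : A → ℝ := fun a => ∑ b, Q (a, b)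

/-- Second marginal of a joint PMF on `A × A`. -/
def margY {A : Type} [Fintype A] (Q : A × A → ℝ) : A → ℝ := fun b => ∑ a, Q (a, b)

/-- Expected distortion of a joint PMF. -/
def expDist {A : Type} [Fintype A] (d : A → A → ℝ) (Q : A × A → ℝ) : ℝ :=
  ∑ q : A × A, Q q * d q.1 q.2

/-- Generalized divergence `D̃_Δ(P_Y, P)`: minimum of `D(Q_X‖P)` over joint PMFs `Q`
with second marginal `P_Y` and expected distortion at most `Δ`. -/
def Dtilde {A : Type} [Fintype A] (d : A → A → ℝ) (Δ : ℝ) (PY P : A → ℝ) : ℝ :=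
  sInf {v | ∃ Q : A × A → ℝ,
    IsPMF Q ∧ margY Q = PY ∧ expDist d Q ≤ Δ ∧ v = klDiv (margX Q) P}

/-- Earth mover distance between two PMFs. -/
def EMD {A : Type} [Fintype A] (d : A → A → ℝ) (P P' : A → ℝ) : ℝ :=
  sInf {v | ∃ R : A × A → ℝ,
    IsPMF R ∧ margX R = P ∧ margY R = P' ∧ v = expDist d R}

/-- Memoryless (product) probability of a sequence. -/
def seqProb {A : Type} {n : ℕ} (P : A → ℝ) (x : Fin n → A) : ℝ := ∏ i, P (x i)

/-- Additive extension of a per-letter distortion to sequences. -/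
def dSeq {A : Type} {n : ℕ} (d : A → A → ℝ) (x y : Fin n → A) : ℝ := ∑ i, d (x i) (y i)

/-- Empirical PMF (type) of a sequence. -/
def empP {A : Type} [Fintype A] [DecidableEq A] {n : ℕ} (x : Fin n → A) : A → ℝ :=
  fun a => ((univ.filter fun i => x i = a).card : ℝ) / (n : ℝ)

/-- Empirical entropy of a sequence. -/
def empEnt {A : Type} [Fintype A] [DecidableEq A] {n : ℕ} (y : Fin n → A) : ℝ :=
  -∑ a, if 0 < empP y a then empP y a * Real.log (empP y a) else 0

/-- Conditional type class `T(y|x)`. -/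
def condTypeClass {A : Type} [Fintype A] [DecidableEq A] {n : ℕ} (x y : Fin n → A) :
    Finset (Fin n → A) :=
  univ.filter fun y' => ∀ a b : A,
    (univ.filter fun i => x i = a ∧ y' i = b).card
      = (univ.filter fun i => x i = a ∧ y i = b).card

/-- Number of distinct conditional type classes `T(y|x)` arising from `y` with
`dn x y ≤ n·Δ`. -/
def numCondTypes {A : Type} [Fintype A] [DecidableEq A] {n : ℕ}
    (dn : (Fin n → A) → (Fin n → A) → ℝ) (Δ : ℝ) (x : Fin n → A) : ℕ :=
  ((univ.filter fun y => dn x y ≤ (n : ℝ) * Δ).image fun y => condTypeClass x y).card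

/-- The optimal attack channel `A*_Δ(y|x) = c_n(x)/|T(y|x)|` on admissible `y`,
and `0` otherwise; here `c_n(x)` is the reciprocal of the number of admissible
conditional type classes. -/
def Astar {A : Type} [Fintype A] [DecidableEq A] {n : ℕ}
    (dn : (Fin n → A) → (Fin n → A) → ℝ) (Δ : ℝ) (x y : Fin n → A) : ℝ :=
  if dn x y ≤ (n : ℝ) * Δ then
    ((numCondTypes dn Δ x : ℝ))⁻¹ / ((condTypeClass x y).card : ℝ)
  else 0

/-- A channel on `A^n`: `W x y` is the conditional probability of output `y` given input `x`. -/
def IsChannel {A : Type} [Fintype A] {n : ℕ}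
    (W : (Fin n → A) → (Fin n → A) → ℝ) : Prop :=
  (∀ x y, 0 ≤ W x y) ∧ ∀ x, ∑ y, W x y = 1

/-- The class `C_Δ` of admissible channels: those assigning zero probability to any
`y` with `dn x y > n·Δ`. -/
def InC {A : Type} [Fintype A] {n : ℕ}
    (dn : (Fin n → A) → (Fin n → A) → ℝ) (Δ : ℝ)
    (W : (Fin n → A) → (Fin n → A) → ℝ) : Prop :=
  IsChannel W ∧ ∀ x y, (n : ℝ) * Δ < dn x y → W x y = 0

/-- False positive probability: `Φ y` is the probability of deciding `H₁` given `y`. -/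
def PFP {A : Type} [Fintype A] {n : ℕ} (P0 : A → ℝ) (Φ : (Fin n → A) → ℝ)
    (A0 : (Fin n → A) → (Fin n → A) → ℝ) : ℝ :=
  ∑ x, ∑ y, seqProb P0 x * A0 x y * Φ y

/-- False negative probability. -/
def PFN {A : Type} [Fintype A] {n : ℕ} (P1 : A → ℝ) (Φ : (Fin n → A) → ℝ)
    (A1 : (Fin n → A) → (Fin n → A) → ℝ) : ℝ :=
  ∑ x, ∑ y, seqProb P1 x * A1 x y * (1 - Φ y)

/-- Sequence-level generalized divergence
`D̃ⁿ_Δ(y,P) = min_{x : d(x,y) ≤ nΔ} D(P̂_x‖P)`. -/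
def DtildeN {A : Type} [Fintype A] [DecidableEq A] {n : ℕ} (d : A → A → ℝ) (Δ : ℝ)
    (y : Fin n → A) (P : A → ℝ) : ℝ :=
  sInf {v | ∃ x : Fin n → A, dSeq d x y ≤ (n : ℝ) * Δ ∧ v = klDiv (empP x) P}


/-! The backward direction takes optimal couplings `R₀ : P₀ → P_Y` and `R₁ : P₁ → P_Y`: then
`Q = R₀` is admissible and `R₁` shows `D̃_{Δ₁}(P_Y, P₁) = D(P₁‖P₁) = 0`. For the forward
direction, the two nested minimisations are one minimisation of `D(R_X‖P₁)` over the compact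
set of admissible pairs `(Q, R)` with `R_Y = Q_Y`; a minimiser has divergence `0`, so `R_X = P₁`,
and `P_Y = Q_Y` is witnessed by the couplings `Q` and `R`. -/

open InformationTheory (klFun klFun_nonneg klFun_eq_zero_iff continuous_klFun)

section Divergence

variable {A : Type} [Fintype A]

lemma klDiv_self (P : A → ℝ) : klDiv P P = 0 :=
  Finset.sum_eq_zero fun a _ => by
    split_ifs with h
    · simp [div_self h.ne']
    · rfl

lemma klDiv_eq_sum_mul_klFun {Q P : A → ℝ} (hQ : IsPMF Q) (hP : IsPMF P)
    (hPpos : ∀ a, 0 < P a) : klDiv Q P = ∑ a, P a * klFun (Q a / P a) := by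
  have hterm : ∀ a, P a * klFun (Q a / P a)
      = (if 0 < Q a then Q a * Real.log (Q a / P a) else 0) + (P a - Q a) := by
    intro a
    have hPa := (hPpos a).ne'
    rcases (hQ.1 a).eq_or_lt with hQa | hQa
    · simp [klFun, ← hQa]
    · simp only [klFun, if_pos hQa]
      field_simp
      ring
  simp only [hterm, Finset.sum_add_distrib, Finset.sum_sub_distrib, hQ.2, hP.2, sub_self,
    add_zero, klDiv]

lemma klDiv_nonneg {Q P : A → ℝ} (hQ : IsPMF Q) (hP : IsPMF P) (hPpos : ∀ a, 0 < P a) :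
    0 ≤ klDiv Q P := by
  rw [klDiv_eq_sum_mul_klFun hQ hP hPpos]
  exact Finset.sum_nonneg fun a _ =>
    mul_nonneg (hPpos a).le (klFun_nonneg (div_nonneg (hQ.1 a) (hPpos a).le))

lemma eq_of_klDiv_eq_zero {Q P : A → ℝ} (hQ : IsPMF Q) (hP : IsPMF P) (hPpos : ∀ a, 0 < P a)
    (h : klDiv Q P = 0) : Q = P := by
  have hratio : ∀ a, 0 ≤ Q a / P a := fun a => div_nonneg (hQ.1 a) (hPpos a).le
  rw [klDiv_eq_sum_mul_klFun hQ hP hPpos, Finset.sum_eq_zero_iff_of_nonneg fun a _ =>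
    mul_nonneg (hPpos a).le (klFun_nonneg (hratio a))] at h
  funext a
  have hzero := h a (Finset.mem_univ a)
  rwa [mul_eq_zero, or_iff_right (hPpos a).ne', klFun_eq_zero_iff (hratio a),
    div_eq_one_iff_eq (hPpos a).ne'] at hzero

lemma continuousOn_klDiv {P : A → ℝ} (hP : IsPMF P) (hPpos : ∀ a, 0 < P a) :
    ContinuousOn (fun Q => klDiv Q P) {Q | IsPMF Q} := by
  refine ContinuousOn.congr (f := fun Q => ∑ a, P a * klFun (Q a / P a)) ?_
    fun Q hQ => klDiv_eq_sum_mul_klFun hQ hP hPpos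
  exact (continuous_finsetSum _ fun a _ => continuous_const.mul
    (continuous_klFun.comp ((continuous_apply a).div_const _))).continuousOn

end Divergence

section Couplings

variable {A : Type} [Fintype A]

lemma isCompact_setOf_isPMF {ι : Type} [Fintype ι] : IsCompact {Q : ι → ℝ | IsPMF Q} :=
  isCompact_stdSimplex ℝ ι

lemma sum_margX (Q : A × A → ℝ) : ∑ a, margX Q a = ∑ q, Q q :=
  (Fintype.sum_prod_type Q).symm

lemma sum_margY (Q : A × A → ℝ) : ∑ b, margY Q b = ∑ q, Q q :=
  Finset.sum_comm.trans (Fintype.sum_prod_type Q).symm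

lemma IsPMF.margX {Q : A × A → ℝ} (hQ : IsPMF Q) : IsPMF (margX Q) :=
  ⟨fun a => Finset.sum_nonneg fun b _ => hQ.1 (a, b), (sum_margX Q).trans hQ.2⟩

lemma IsPMF.margY {Q : A × A → ℝ} (hQ : IsPMF Q) : IsPMF (margY Q) :=
  ⟨fun b => Finset.sum_nonneg fun a _ => hQ.1 (a, b), (sum_margY Q).trans hQ.2⟩

lemma continuous_margX : Continuous (margX : (A × A → ℝ) → A → ℝ) :=
  continuous_pi fun a => continuous_finsetSum _ fun b _ => continuous_apply (a, b)

lemma continuous_margY : Continuous (margY : (A × A → ℝ) → A → ℝ) :=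
  continuous_pi fun b => continuous_finsetSum _ fun a _ => continuous_apply (a, b)

lemma continuous_expDist (d : A → A → ℝ) : Continuous (expDist d) :=
  continuous_finsetSum _ fun q _ => (continuous_apply q).mul continuous_const

def distortionBall (d : A → A → ℝ) (Δ : ℝ) : Set (A × A → ℝ) :=
  {Q | IsPMF Q ∧ expDist d Q ≤ Δ}

lemma isCompact_distortionBall (d : A → A → ℝ) (Δ : ℝ) : IsCompact (distortionBall d Δ) :=
  isCompact_setOf_isPMF.inter_right (isClosed_le (continuous_expDist d) continuous_const)

def diagCoupling (P : A → ℝ) : A × A → ℝ := fun q => if q.1 = q.2 then P q.1 else 0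

lemma margX_diagCoupling (P : A → ℝ) : margX (diagCoupling P) = P := by
  funext a
  simp [margX, diagCoupling]

lemma margY_diagCoupling (P : A → ℝ) : margY (diagCoupling P) = P := by
  funext b
  simp [margY, diagCoupling]

lemma IsPMF.diagCoupling {P : A → ℝ} (hP : IsPMF P) : IsPMF (diagCoupling P) := by
  refine ⟨fun q => ?_, ?_⟩
  · unfold _root_.diagCoupling
    split_ifs
    exacts [hP.1 _, le_rfl]
  · rw [← sum_margX, margX_diagCoupling, hP.2]

lemma expDist_diagCoupling {d : A → A → ℝ} (hdrefl : ∀ a, d a a = 0) (P : A → ℝ) :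
    expDist d (diagCoupling P) = 0 :=
  Finset.sum_eq_zero fun q _ => by
    unfold diagCoupling
    split_ifs with h
    · rw [h, hdrefl, mul_zero]
    · rw [zero_mul]

lemma diagCoupling_mem_distortionBall {d : A → A → ℝ} (hdrefl : ∀ a, d a a = 0) {Δ : ℝ}
    (hΔ : 0 ≤ Δ) {P : A → ℝ} (hP : IsPMF P) : diagCoupling P ∈ distortionBall d Δ :=
  ⟨hP.diagCoupling, (expDist_diagCoupling hdrefl P).trans_le hΔ⟩

def couplings (P P' : A → ℝ) : Set (A × A → ℝ) :=
  {R | IsPMF R ∧ margX R = P ∧ margY R = P'}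

lemma isCompact_couplings (P P' : A → ℝ) : IsCompact (couplings P P') := by
  have hclosed : IsClosed {R : A × A → ℝ | margX R = P ∧ margY R = P'} :=
    (isClosed_eq continuous_margX continuous_const).inter
      (isClosed_eq continuous_margY continuous_const)
  exact isCompact_setOf_isPMF.inter_right hclosed

lemma couplings_nonempty {P P' : A → ℝ} (hP : IsPMF P) (hP' : IsPMF P') :
    (couplings P P').Nonempty := by
  refine ⟨fun q => P q.1 * P' q.2, ⟨fun q => mul_nonneg (hP.1 _) (hP'.1 _), ?_⟩, ?_, ?_⟩
  · simp [Fintype.sum_prod_type, ← Finset.mul_sum, hP'.2, hP.2]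
  · funext a
    simp [margX, ← Finset.mul_sum, hP'.2]
  · funext b
    simp [margY, ← Finset.sum_mul, hP.2]

end Couplings

section Optimization

variable {A : Type} [Fintype A]

lemma EMD_eq_sInf_image (d : A → A → ℝ) (P P' : A → ℝ) :
    EMD d P P' = sInf (expDist d '' couplings P P') := by
  simp only [EMD, couplings, Set.image, Set.mem_ofPred_eq, and_assoc, eq_comm]

lemma EMD_le_expDist (d : A → A → ℝ) {P P' : A → ℝ} {R : A × A → ℝ}
    (hR : R ∈ couplings P P') : EMD d P P' ≤ expDist d R := by
  rw [EMD_eq_sInf_image]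
  exact csInf_le ((isCompact_couplings P P').image (continuous_expDist d)).bddBelow ⟨R, hR, rfl⟩

lemma exists_expDist_eq_EMD (d : A → A → ℝ) {P P' : A → ℝ} (hP : IsPMF P) (hP' : IsPMF P') :
    ∃ R ∈ couplings P P', expDist d R = EMD d P P' := by
  rw [EMD_eq_sInf_image]
  exact ((isCompact_couplings P P').image (continuous_expDist d)).sInf_mem
    ((couplings_nonempty hP hP').image _)

lemma Dtilde_nonneg (d : A → A → ℝ) (Δ : ℝ) (PY : A → ℝ) {P : A → ℝ} (hP : IsPMF P)
    (hPpos : ∀ a, 0 < P a) : 0 ≤ Dtilde d Δ PY P :=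
  Real.sInf_nonneg fun _ ⟨_, hQ, _, _, hv⟩ => hv ▸ klDiv_nonneg hQ.margX hP hPpos

lemma Dtilde_eq_zero {d : A → A → ℝ} {Δ : ℝ} {PY P : A → ℝ} (hP : IsPMF P)
    (hPpos : ∀ a, 0 < P a) {R : A × A → ℝ} (hR : R ∈ couplings P PY) (hRd : expDist d R ≤ Δ) :
    Dtilde d Δ PY P = 0 :=
  le_antisymm
    (csInf_le ⟨0, fun _ ⟨_, hQ, _, _, hv⟩ => hv ▸ klDiv_nonneg hQ.margX hP hPpos⟩
      ⟨R, hR.1, hR.2.2, hRd, by rw [hR.2.1, klDiv_self]⟩)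
    (Dtilde_nonneg d Δ PY hP hPpos)

lemma exists_pair_klDiv_le_sInf_Dtilde {d : A → A → ℝ} (hdrefl : ∀ a, d a a = 0)
    {P0 P1 : A → ℝ} (hP0 : IsPMF P0) (hP1 : IsPMF P1) (hP1pos : ∀ a, 0 < P1 a)
    {Δ0 Δ1 : ℝ} (hΔ0 : 0 ≤ Δ0) (hΔ1 : 0 ≤ Δ1) :
    ∃ Q R, Q ∈ distortionBall d Δ0 ∧ margX Q = P0 ∧ R ∈ distortionBall d Δ1 ∧
      margY R = margY Q ∧
      klDiv (margX R) P1 ≤ sInf {v | ∃ Q : A × A → ℝ,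
        IsPMF Q ∧ margX Q = P0 ∧ expDist d Q ≤ Δ0 ∧ v = Dtilde d Δ1 (margY Q) P1} := by
  let S : Set ((A × A → ℝ) × (A × A → ℝ)) :=
    distortionBall d Δ0 ×ˢ distortionBall d Δ1 ∩ {p | margX p.1 = P0 ∧ margY p.2 = margY p.1}
  have hS : IsCompact S :=
    ((isCompact_distortionBall d Δ0).prod (isCompact_distortionBall d Δ1)).inter_right
      ((isClosed_eq (continuous_margX.comp continuous_fst) continuous_const).inter
        (isClosed_eq (continuous_margY.comp continuous_snd)
          (continuous_margY.comp continuous_fst)))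
  have hdiag : ∀ {Δ : ℝ} {P : A → ℝ}, 0 ≤ Δ → IsPMF P → diagCoupling P ∈ distortionBall d Δ :=
    fun hΔ hP => diagCoupling_mem_distortionBall hdrefl hΔ hP
  have hne : S.Nonempty := ⟨(diagCoupling P0, diagCoupling P0),
    ⟨hdiag hΔ0 hP0, hdiag hΔ1 hP0⟩, margX_diagCoupling P0, rfl⟩
  have hcont : ContinuousOn (fun p : (A × A → ℝ) × (A × A → ℝ) => klDiv (margX p.2) P1) S :=
    (continuousOn_klDiv hP1 hP1pos).comp (continuous_margX.comp continuous_snd).continuousOn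
      fun p hp => hp.1.2.1.margX
  obtain ⟨⟨Q, R⟩, ⟨⟨hQ, hR⟩, hQX, hRY⟩, hmin⟩ := hS.exists_isMinOn hne hcont
  refine ⟨Q, R, hQ, hQX, hR, hRY, le_csInf ⟨_, _, hP0.diagCoupling, margX_diagCoupling P0,
    (hdiag hΔ0 hP0).2, rfl⟩ ?_⟩
  rintro _ ⟨Q', hQ', hQ'X, hQ'd, rfl⟩
  refine le_csInf ⟨_, _, hQ'.margY.diagCoupling, margY_diagCoupling _,
    (hdiag hΔ1 hQ'.margY).2, rfl⟩ ?_
  rintro _ ⟨R', hR', hR'Y, hR'd, rfl⟩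
  exact hmin (a := (Q', R')) ⟨⟨⟨hQ', hQ'd⟩, hR', hR'd⟩, hQ'X, hR'Y⟩

end Optimization

theorem indistinguishability_emd_general
    {A : Type} [Fintype A]
    (d : A → A → ℝ) (hdrefl : ∀ a, d a a = 0)
    (P0 P1 : A → ℝ) (hP0 : IsPMF P0) (hP1 : IsPMF P1)
    (hP1pos : ∀ a, 0 < P1 a)
    (Δ0 Δ1 : ℝ) (hΔ0 : 0 ≤ Δ0) (hΔ1 : 0 ≤ Δ1) :
    sInf {v | ∃ Q : A × A → ℝ,
        IsPMF Q ∧ margX Q = P0 ∧ expDist d Q ≤ Δ0 ∧ v = Dtilde d Δ1 (margY Q) P1} = 0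
      ↔ ∃ PY : A → ℝ, IsPMF PY ∧ EMD d P0 PY ≤ Δ0 ∧ EMD d P1 PY ≤ Δ1 := by
  constructor
  · intro h
    obtain ⟨Q, R, hQ, hQX, hR, hRY, hle⟩ :=
      exists_pair_klDiv_le_sInf_Dtilde hdrefl hP0 hP1 hP1pos hΔ0 hΔ1
    have hRX : margX R = P1 := eq_of_klDiv_eq_zero hR.1.margX hP1 hP1pos
      (le_antisymm (h ▸ hle) (klDiv_nonneg hR.1.margX hP1 hP1pos))
    exact ⟨margY Q, hQ.1.margY, (EMD_le_expDist d ⟨hQ.1, hQX, rfl⟩).trans hQ.2,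
      (EMD_le_expDist d ⟨hR.1, hRX, hRY⟩).trans hR.2⟩
  · rintro ⟨PY, hPY, hEMD0, hEMD1⟩
    obtain ⟨R0, hR0, hR0d⟩ := exists_expDist_eq_EMD d hP0 hPY
    obtain ⟨R1, hR1, hR1d⟩ := exists_expDist_eq_EMD d hP1 hPY
    have hvalue_nonneg : ∀ v ∈ {v | ∃ Q : A × A → ℝ, IsPMF Q ∧ margX Q = P0 ∧
        expDist d Q ≤ Δ0 ∧ v = Dtilde d Δ1 (margY Q) P1}, 0 ≤ v :=
      fun _ ⟨Q, _, _, _, hv⟩ => hv ▸ Dtilde_nonneg d Δ1 (margY Q) hP1 hP1pos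
    have hDtilde : Dtilde d Δ1 PY P1 = 0 := Dtilde_eq_zero hP1 hP1pos hR1 (hR1d.trans_le hEMD1)
    exact le_antisymm (csInf_le ⟨0, hvalue_nonneg⟩
        ⟨R0, hR0.1, hR0.2.1, hR0d.trans_le hEMD0, by rw [hR0.2.2, hDtilde]⟩)
      (Real.sInf_nonneg hvalue_nonneg)

/-- Corollary 1: EMD characterization of the indistinguishability region. -/
theorem indistinguishability_emd
    {A : Type} [Fintype A] [Nonempty A]
    (d : A → A → ℝ) (hd : ∀ a b, 0 ≤ d a b) (hdrefl : ∀ a, d a a = 0)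
    (P0 P1 : A → ℝ) (hP0 : IsPMF P0) (hP1 : IsPMF P1)
    (hP0pos : ∀ a, 0 < P0 a) (hP1pos : ∀ a, 0 < P1 a)
    (Δ0 Δ1 : ℝ) (hΔ0 : 0 ≤ Δ0) (hΔ1 : 0 ≤ Δ1) :
    sInf {v | ∃ Q : A × A → ℝ,
        IsPMF Q ∧ margX Q = P0 ∧ expDist d Q ≤ Δ0 ∧ v = Dtilde d Δ1 (margY Q) P1} = 0
      ↔ ∃ PY : A → ℝ, IsPMF PY ∧ EMD d P0 PY ≤ Δ0 ∧ EMD d P1 PY ≤ Δ1 :=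
  indistinguishability_emd_general d hdrefl P0 P1 hP0 hP1 hP1pos Δ0 Δ1 hΔ0 hΔ1
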